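/- If μ is a B-measure on ∂K for an origin-symmetric planar convex body K, then the support of μ is contained in A(K) \ E(K), where E(K) is the union of the relative interiors of the non-degenerate line segments contained in ∂K. -/

import Mathlib

open Set MeasureTheory Pointwise

abbrev Plane := ℝ × ℝ

/-- An origin-symmetric convex body in the plane: compact, convex,
nonempty interior, symmetric about the origin. -/
def IsSymmConvexBody (K : Set Plane) : Prop :=
  Convex ℝ K ∧ IsCompact K ∧ (interior K).Nonempty ∧ K = -K

/-- Birkhoff orthogonality with respect to the norm induced by `K`
(whose Minkowski functional is `gauge K`). -/
def BOrth (K : Set Plane) (x y : Plane) : Prop :=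
  ∀ t : ℝ, gauge K x ≤ gauge K (x + t • y)

/-- The set of Auerbach points of `K`. -/
def Auerbach (K : Set Plane) : Set Plane :=
  {x | x ∈ frontier K ∧ ∃ y ∈ frontier K, BOrth K x y ∧ BOrth K y x}

/-- `E(K)`: the union of the open non-degenerate segments contained in `∂K`. -/
def SegUnion (K : Set Plane) : Set Plane :=
  {x | ∃ a b : Plane, a ≠ b ∧ segment ℝ a b ⊆ frontier K ∧ x ∈ openSegment ℝ a b}

/-- A closed antipode-free arc of `∂K` with endpoints `x` and `y`:
a closed connected subset of `∂K` containing `x` and `y`, containing no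
pair of antipodal points, and minimal with these properties. -/
def IsBArc (K C : Set Plane) (x y : Plane) : Prop :=
  C ⊆ frontier K ∧ IsClosed C ∧ IsPreconnected C ∧ x ∈ C ∧ y ∈ C ∧
  (∀ z ∈ C, -z ∉ C) ∧
  ∀ C' ⊆ C, IsClosed C' → IsPreconnected C' → x ∈ C' → y ∈ C' → C' = C

/-- An angular measure on `∂K`. -/
def IsAngularMeasure (K : Set Plane) (μ : Measure Plane) : Prop :=
  μ (frontier K) = ENNReal.ofReal (2 * Real.pi) ∧
  μ (frontier K)ᶜ = 0 ∧
  (∀ X : Set Plane, μ (-X) = μ X) ∧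
  (∀ x : Plane, μ {x} = 0)

/-- A B-measure: an angular measure giving `π/2` to every closed
antipode-free arc whose endpoints are Birkhoff orthogonal. -/
def IsBMeasure (K : Set Plane) (μ : Measure Plane) : Prop :=
  IsAngularMeasure K μ ∧
  ∀ C x y, IsBArc K C x y → BOrth K x y → μ C = ENNReal.ofReal (Real.pi / 2)

/-- The support of a Borel measure: the points all of whose open
neighborhoods have positive measure. -/
def msupp {α : Type*} [TopologicalSpace α] [MeasurableSpace α]
    (μ : Measure α) : Set α :=
  {x | ∀ U : Set α, IsOpen U → x ∈ U → 0 < μ U}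

/-!
Parametrise `∂K` by angle. Every arc of angular length less than `π` is a B-arc, so it has mass
`π/2` as soon as its endpoints are Birkhoff orthogonal, in either order.

If `p` lies inside a segment `[a, b] ⊆ ∂K`, a functional supporting `K` at an inner point of the
segment supports it along the whole segment, so `a` and `b` are both Birkhoff orthogonal to the direction `y` of the segment.
The arcs from `a` to `y` and from `b` to `y` then both have mass `π/2`, so the arc from `a` to `b`,
which is a neighbourhood of `p` in `∂K`, is null and `p` is not in the support.

If `p` is in the support, the arcs on one side of `p`, say the left, have positive mass. For `q`
tending to `p` from the left, choose `t` and `σ` with `q ⊣ t` and `σ ⊣ q`, each at mass exactly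
`π/2` beyond `q`. As the mass between `q` and `p` is positive and tends to `0` (`μ` has no atoms),
both `t` and `σ` converge to the first point `τ` at which the mass counted from `p` reaches `π/2`;
since `⊣` is a closed relation, `p ⊣ τ` and `τ ⊣ p`.
-/

open Real Filter Topology

theorem notMem_interior_of_isMaxOn {E : Type*} [NormedAddCommGroup E] [NormedSpace ℝ E]
    {s : Set E} {f : E →L[ℝ] ℝ} {x : E} (hf : f ≠ 0) (hx : IsMaxOn f s x) : x ∉ interior s :=
  fun hint => hf ((hx.isLocalMax (mem_interior_iff_mem_nhds.1 hint)).hasFDerivAt_eq_zero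
    f.hasFDerivAt)

theorem Monotone.tendsto_sInf_preimage_Ici {α β : Type*} [LinearOrder β] [TopologicalSpace β]
    [OrderTopology β] {m : ℝ → β} (hm : Monotone m) {P : β} {θ₀ θ₁ : ℝ} (h₀ : m θ₀ < P)
    (h₁ : P ≤ m θ₁) {l : Filter α} {u : α → ℝ} (hlim : Tendsto (fun a => m (u a)) l (𝓝 P))
    (hlt : ∀ᶠ a in l, m (u a) < P) : Tendsto u l (𝓝 (sInf (m ⁻¹' Ici P))) := by
  have hbdd : BddBelow (m ⁻¹' Ici P) :=
    ⟨θ₀, fun θ hθ => le_of_not_gt fun h => (h₀.trans_le hθ).not_ge (hm h.le)⟩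
  refine tendsto_order.2 ⟨fun a ha => ?_, fun a ha => ?_⟩
  · have ha' : a ∉ m ⁻¹' Ici P := notMem_of_lt_csInf ha hbdd
    filter_upwards [hlim.eventually_const_lt (lt_of_not_ge ha')] with x hx
    exact hm.reflect_lt hx
  · obtain ⟨θ, hθ, hθa⟩ := exists_lt_of_csInf_lt ⟨θ₁, h₁⟩ ha
    filter_upwards [hlt] with x hx
    exact lt_of_not_ge fun h => hx.not_ge (le_trans hθ (hm (hθa.le.trans h)))

def wedge (x : Plane) : Plane →L[ℝ] ℝ :=
  x.1 • ContinuousLinearMap.snd ℝ ℝ ℝ - x.2 • ContinuousLinearMap.fst ℝ ℝ ℝ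

@[simp]
theorem wedge_apply (x y : Plane) : wedge x y = x.1 * y.2 - x.2 * y.1 := by
  simp [wedge]

theorem wedge_self (x : Plane) : wedge x x = 0 := by
  simp [mul_comm]

theorem wedge_swap (x y : Plane) : wedge y x = -wedge x y := by
  simp only [wedge_apply]
  ring

theorem wedge_ne_zero {x : Plane} (hx : x ≠ 0) : wedge x ≠ 0 := by
  intro h
  have h' := DFunLike.congr_fun h (-x.2, x.1)
  simp only [wedge_apply, zero_apply] at h'
  exact hx (Prod.ext (by rw [Prod.fst_zero]; nlinarith [sq_nonneg x.1, sq_nonneg x.2])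
    (by rw [Prod.snd_zero]; nlinarith [sq_nonneg x.1, sq_nonneg x.2]))

theorem BOrth.neg_right {K : Set Plane} {x y : Plane} (h : BOrth K x y) : BOrth K x (-y) :=
  fun t => by simpa using h (-t)

theorem IsBArc.swap {K C : Set Plane} {x y : Plane} (h : IsBArc K C x y) : IsBArc K C y x :=
  let ⟨h₁, h₂, h₃, hx, hy, h₄, h₅⟩ := h
  ⟨h₁, h₂, h₃, hy, hx, h₄, fun C' hC' hc hp hy' hx' => h₅ C' hC' hc hp hx' hy'⟩

theorem IsAngularMeasure.msupp_subset_frontier {K : Set Plane} {μ : Measure Plane}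
    (hμ : IsAngularMeasure K μ) : msupp μ ⊆ frontier K := fun _ hp =>
  by_contra fun h => (hp _ isClosed_frontier.isOpen_compl h).ne' hμ.2.1

namespace IsSymmConvexBody

variable {K : Set Plane}

theorem zero_mem_interior (hK : IsSymmConvexBody K) : (0 : Plane) ∈ interior K := by
  obtain ⟨hconv, -, ⟨x, hx⟩, hsymm⟩ := hK
  have hx' : -x ∈ closure K :=
    subset_closure (by rw [hsymm]; exact neg_mem_neg.2 (interior_subset hx))
  simpa using hconv.combo_interior_closure_mem_interior hx hx' (a := 1 / 2) (b := 1 / 2)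
    (by norm_num) (by norm_num) (by norm_num)

theorem mem_nhds_zero (hK : IsSymmConvexBody K) : K ∈ 𝓝 (0 : Plane) :=
  mem_interior_iff_mem_nhds.1 hK.zero_mem_interior

theorem continuous_gauge (hK : IsSymmConvexBody K) : Continuous (gauge K) :=
  _root_.continuous_gauge hK.1 hK.mem_nhds_zero

theorem gauge_neg (hK : IsSymmConvexBody K) (x : Plane) : gauge K (-x) = gauge K x :=
  _root_.gauge_neg (fun y hy => by rw [hK.2.2.2]; exact neg_mem_neg.2 hy) x

theorem gauge_eq_one_iff (hK : IsSymmConvexBody K) {x : Plane} :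
    gauge K x = 1 ↔ x ∈ frontier K :=
  gauge_eq_one_iff_mem_frontier hK.1 hK.mem_nhds_zero

theorem gauge_lt_one_iff (hK : IsSymmConvexBody K) {x : Plane} :
    gauge K x < 1 ↔ x ∈ interior K :=
  gauge_lt_one_iff_mem_interior hK.1 hK.mem_nhds_zero

theorem gauge_pos (hK : IsSymmConvexBody K) {x : Plane} : 0 < gauge K x ↔ x ≠ 0 :=
  _root_.gauge_pos (absorbent_nhds_zero hK.mem_nhds_zero) (hK.2.1.isVonNBounded ℝ)

theorem zero_notMem_frontier (hK : IsSymmConvexBody K) : (0 : Plane) ∉ frontier K := by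
  simp [← hK.gauge_eq_one_iff]

theorem inv_gauge_smul_mem_frontier (hK : IsSymmConvexBody K) {w : Plane} (hw : w ≠ 0) :
    (gauge K w)⁻¹ • w ∈ frontier K := by
  rw [← hK.gauge_eq_one_iff, gauge_smul_of_nonneg (inv_nonneg.2 (gauge_nonneg w)), smul_eq_mul,
    inv_mul_cancel₀ (hK.gauge_pos.2 hw).ne']

theorem mem_frontier_of_isMaxOn (hK : IsSymmConvexBody K) {f : Plane →L[ℝ] ℝ} {x : Plane}
    (hf : f ≠ 0) (hxK : x ∈ K) (hmax : IsMaxOn f K x) : x ∈ frontier K := by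
  rw [hK.2.1.isClosed.frontier_eq]
  exact ⟨hxK, notMem_interior_of_isMaxOn hf hmax⟩

theorem exists_isMaxOn_of_mem_frontier (hK : IsSymmConvexBody K) {x : Plane}
    (hx : x ∈ frontier K) : ∃ f : Plane →L[ℝ] ℝ, f ≠ 0 ∧ IsMaxOn f K x := by
  obtain ⟨f, hf⟩ := geometric_hahn_banach_open_point hK.1.interior isOpen_interior hx.2
  refine ⟨f, fun h => by simpa [h] using hf 0 hK.zero_mem_interior, isMaxOn_iff.2 fun z hz => ?_⟩
  have hK' : K ⊆ closure (interior K) := by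
    rw [hK.1.closure_interior_eq_closure_of_nonempty_interior hK.2.2.1]
    exact subset_closure
  exact closure_lt_subset_le f.continuous continuous_const
    (closure_mono (fun z hz => hf z hz) (hK' hz))

theorem borth_of_isMaxOn (hK : IsSymmConvexBody K) {f : Plane →L[ℝ] ℝ} {x y : Plane}
    (hf : f ≠ 0) (hxK : x ∈ K) (hmax : IsMaxOn f K x) (hy : f y = 0) : BOrth K x y := by
  intro t
  rw [hK.gauge_eq_one_iff.2 (hK.mem_frontier_of_isMaxOn hf hxK hmax)]
  by_contra! h
  have hft : f (x + t • y) = f x := by simp [hy]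
  exact notMem_interior_of_isMaxOn hf (isMaxOn_iff.2 fun z hz => hft ▸ isMaxOn_iff.1 hmax z hz)
    (hK.gauge_lt_one_iff.1 h)

theorem exists_borth_right (hK : IsSymmConvexBody K) {x : Plane} (hx : x ∈ frontier K) :
    ∃ y ∈ frontier K, BOrth K x y := by
  obtain ⟨f, hf, hmax⟩ := hK.exists_isMaxOn_of_mem_frontier hx
  obtain ⟨w, hw, hw0⟩ := (Submodule.ne_bot_iff _).1
    ((f : Plane →ₗ[ℝ] ℝ).ker_ne_bot_of_finrank_lt (by simp))
  refine ⟨_, hK.inv_gauge_smul_mem_frontier hw0, hK.borth_of_isMaxOn hf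
    (hK.2.1.isClosed.frontier_subset hx) hmax ?_⟩
  have hfw : f w = 0 := hw
  simp [hfw]

theorem exists_borth_left (hK : IsSymmConvexBody K) {y : Plane} (hy : y ≠ 0) :
    ∃ x ∈ frontier K, BOrth K x y := by
  obtain ⟨x, hxK, hmax⟩ := hK.2.1.exists_isMaxOn ⟨0, interior_subset hK.zero_mem_interior⟩
    (wedge y).continuous.continuousOn
  exact ⟨x, hK.mem_frontier_of_isMaxOn (wedge_ne_zero hy) hxK hmax,
    hK.borth_of_isMaxOn (wedge_ne_zero hy) hxK hmax (wedge_self y)⟩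

theorem borth_neg_left (hK : IsSymmConvexBody K) {x y : Plane} (h : BOrth K x y) :
    BOrth K (-x) y := fun t => by
  have := h (-t)
  rwa [← hK.gauge_neg x, ← hK.gauge_neg (x + -t • y), neg_add, neg_smul, neg_neg] at this

theorem ne_and_ne_neg_of_borth (hK : IsSymmConvexBody K) {x y : Plane} (hx : x ∈ frontier K)
    (h : BOrth K x y) : y ≠ x ∧ y ≠ -x := by
  have hx1 := hK.gauge_eq_one_iff.2 hx
  constructor <;> rintro rfl
  · exact absurd (h (-1)) (by simp [hx1])
  · exact absurd (h 1) (by simp [hx1])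

theorem isClosed_setOf_borth (hK : IsSymmConvexBody K) :
    IsClosed {q : Plane × Plane | BOrth K q.1 q.2} := by
  simp only [BOrth, ofPred_forall]
  exact isClosed_iInter fun t => isClosed_le (hK.continuous_gauge.comp continuous_fst)
    (hK.continuous_gauge.comp (continuous_fst.add (continuous_snd.const_smul t)))

end IsSymmConvexBody

/-- A parametrisation of `∂K` compatible with the central symmetry. The arguments below work for
any such `φ`, so they also apply to the reversed parametrisation `θ ↦ φ (-θ)`. -/
structure IsBoundaryParam (K : Set Plane) (φ : ℝ → Plane) : Prop where
  continuous : Continuous φ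
  mem_frontier : ∀ θ, φ θ ∈ frontier K
  exists_eq : ∀ z ∈ frontier K, ∃ θ, φ θ = z
  antiperiodic : Function.Antiperiodic φ π
  eq_of_abs_sub_lt : ∀ {a b : ℝ}, |a - b| < 2 * π → φ a = φ b → a = b

def arc (φ : ℝ → Plane) (s t : ℝ) : Set Plane := φ '' Icc s t

theorem arc_mono {φ : ℝ → Plane} {s t s' t' : ℝ} (hs : s ≤ s') (ht : t' ≤ t) :
    arc φ s' t' ⊆ arc φ s t :=
  image_mono (Icc_subset_Icc hs ht)

theorem arc_union {φ : ℝ → Plane} {s t r : ℝ} (h₁ : s ≤ t) (h₂ : t ≤ r) :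
    arc φ s r = arc φ s t ∪ arc φ t r := by
  rw [arc, arc, arc, ← image_union, Icc_union_Icc_eq_Icc h₁ h₂]

theorem arc_comp_neg (φ : ℝ → Plane) (s t : ℝ) : arc (fun θ => φ (-θ)) (-t) (-s) = arc φ s t := by
  rw [arc, arc, ← image_image (g := φ) (f := Neg.neg), image_neg_Icc, neg_neg, neg_neg]

namespace IsBoundaryParam

variable {K : Set Plane} {φ : ℝ → Plane} {μ : Measure Plane}

theorem comp_neg (hφ : IsBoundaryParam K φ) : IsBoundaryParam K (fun θ => φ (-θ)) where
  continuous := hφ.continuous.comp continuous_neg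
  mem_frontier θ := hφ.mem_frontier (-θ)
  exists_eq z hz := let ⟨θ, hθ⟩ := hφ.exists_eq z hz; ⟨-θ, by simpa using hθ⟩
  antiperiodic θ := by simpa [neg_add_eq_sub] using hφ.antiperiodic.sub_eq (-θ)
  eq_of_abs_sub_lt h heq :=
    neg_injective (hφ.eq_of_abs_sub_lt (by rwa [neg_sub_neg, abs_sub_comm]) heq)

theorem exists_mem_Ico (hφ : IsBoundaryParam K φ) {z : Plane} (hz : z ∈ frontier K) (c : ℝ) :
    ∃ θ ∈ Ico c (c + 2 * π), φ θ = z := by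
  obtain ⟨θ, rfl⟩ := hφ.exists_eq z hz
  obtain ⟨θ', hθ', h⟩ := hφ.antiperiodic.periodic_two_mul.exists_mem_Ico two_pi_pos θ c
  exact ⟨θ', hθ', h.symm⟩

theorem exists_mem_Ioo_eq_or_eq_neg (hφ : IsBoundaryParam K φ) {s : ℝ} {z : Plane}
    (hz : z ∈ frontier K) (h₁ : z ≠ φ s) (h₂ : z ≠ -φ s) :
    ∃ t ∈ Ioo s (s + π), φ t = z ∨ φ t = -z := by
  obtain ⟨θ, ⟨hsθ, hθs⟩, rfl⟩ := hφ.exists_mem_Ico hz s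
  have hθ₁ : θ ≠ s := by rintro rfl; exact h₁ rfl
  have hθ₂ : θ ≠ s + π := by rintro rfl; exact h₂ (hφ.antiperiodic s)
  rcases lt_or_gt_of_ne hθ₂ with h | h
  · exact ⟨θ, ⟨lt_of_le_of_ne hsθ hθ₁.symm, h⟩, Or.inl rfl⟩
  · exact ⟨θ - π, ⟨by linarith, by linarith⟩, Or.inr (hφ.antiperiodic.sub_eq θ)⟩

theorem exists_borth_right_mem_Ioo (hφ : IsBoundaryParam K φ) (hK : IsSymmConvexBody K)
    (s : ℝ) : ∃ t ∈ Ioo s (s + π), BOrth K (φ s) (φ t) := by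
  obtain ⟨y, hy, horth⟩ := hK.exists_borth_right (hφ.mem_frontier s)
  obtain ⟨h₁, h₂⟩ := hK.ne_and_ne_neg_of_borth (hφ.mem_frontier s) horth
  obtain ⟨t, ht, rfl | hneg⟩ := hφ.exists_mem_Ioo_eq_or_eq_neg hy h₁ h₂
  · exact ⟨t, ht, horth⟩
  · exact ⟨t, ht, hneg ▸ horth.neg_right⟩

theorem exists_borth_left_mem_Ioo (hφ : IsBoundaryParam K φ) (hK : IsSymmConvexBody K)
    (s : ℝ) : ∃ t ∈ Ioo s (s + π), BOrth K (φ t) (φ s) := by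
  have hs0 : φ s ≠ 0 := fun h => hK.zero_notMem_frontier (h ▸ hφ.mem_frontier s)
  obtain ⟨x, hx, horth⟩ := hK.exists_borth_left hs0
  obtain ⟨h₁, h₂⟩ := hK.ne_and_ne_neg_of_borth hx horth
  obtain ⟨t, ht, rfl | hneg⟩ :=
    hφ.exists_mem_Ioo_eq_or_eq_neg hx h₁.symm fun h => h₂ (by rw [h, neg_neg])
  · exact ⟨t, ht, horth⟩
  · exact ⟨t, ht, hneg ▸ hK.borth_neg_left horth⟩

theorem arc_subset_frontier (hφ : IsBoundaryParam K φ) (s t : ℝ) : arc φ s t ⊆ frontier K :=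
  image_subset_iff.2 fun θ _ => hφ.mem_frontier θ

theorem isClosed_arc (hφ : IsBoundaryParam K φ) (s t : ℝ) : IsClosed (arc φ s t) :=
  (isCompact_Icc.image hφ.continuous).isClosed

theorem arc_inter_arc_subset (hφ : IsBoundaryParam K φ) {s t r : ℝ} (h₁ : s ≤ t) (h₂ : t ≤ r)
    (h₃ : r < s + 2 * π) : arc φ s t ∩ arc φ t r ⊆ {φ t} := by
  rintro _ ⟨⟨θ₁, hθ₁, rfl⟩, θ₂, hθ₂, h⟩
  have := hφ.eq_of_abs_sub_lt
    (abs_lt.2 ⟨by linarith [hθ₁.2, hθ₂.1, pi_pos], by linarith [hθ₁.1, hθ₂.2]⟩) h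
  rw [mem_singleton_iff, le_antisymm hθ₁.2 (this ▸ hθ₂.1)]

theorem isBArc_arc (hφ : IsBoundaryParam K φ) {s t : ℝ} (h₁ : s < t) (h₂ : t < s + π) :
    IsBArc K (arc φ s t) (φ s) (φ t) := by
  have hπ := pi_pos
  refine ⟨hφ.arc_subset_frontier s t, hφ.isClosed_arc s t,
    isPreconnected_Icc.image _ hφ.continuous.continuousOn, mem_image_of_mem φ ⟨le_rfl, h₁.le⟩,
    mem_image_of_mem φ ⟨h₁.le, le_rfl⟩, ?_, ?_⟩
  · rintro _ ⟨θ₁, hθ₁, rfl⟩ ⟨θ₂, hθ₂, h⟩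
    rw [← hφ.antiperiodic] at h
    have := hφ.eq_of_abs_sub_lt
      (abs_lt.2 ⟨by linarith [hθ₁.2, hθ₂.1], by linarith [hθ₁.1, hθ₂.2]⟩) h
    linarith [hθ₁.1, hθ₂.2]
  · intro C' hC' _ hpre hs ht
    refine hC'.antisymm ?_
    rintro _ ⟨θ, hθ, rfl⟩
    by_contra hθC
    obtain ⟨w, hwC, hw⟩ := isPreconnected_closed_iff.1 hpre _ _ (hφ.isClosed_arc s θ)
      (hφ.isClosed_arc θ t) (hC'.trans (arc_union hθ.1 hθ.2).subset)
      ⟨φ s, hs, mem_image_of_mem φ ⟨le_rfl, hθ.1⟩⟩ ⟨φ t, ht, mem_image_of_mem φ ⟨hθ.2, le_rfl⟩⟩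
    exact hθC (hφ.arc_inter_arc_subset hθ.1 hθ.2 (by linarith) hw ▸ hwC)

theorem measure_arc_add (hφ : IsBoundaryParam K φ) (hμ : IsAngularMeasure K μ) {s t r : ℝ}
    (h₁ : s ≤ t) (h₂ : t ≤ r) (h₃ : r < s + 2 * π) :
    μ (arc φ s r) = μ (arc φ s t) + μ (arc φ t r) := by
  have h0 : μ (arc φ s t ∩ arc φ t r) = 0 :=
    measure_mono_null (hφ.arc_inter_arc_subset h₁ h₂ h₃) (hμ.2.2.2 _)
  rw [arc_union h₁ h₂, ← measure_union_add_inter _ (hφ.isClosed_arc t r).measurableSet, h0,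
    add_zero]

theorem measure_arc_of_borth (hφ : IsBoundaryParam K φ) (hμ : IsBMeasure K μ) {s t : ℝ}
    (h₁ : s < t) (h₂ : t < s + π) (h : BOrth K (φ s) (φ t) ∨ BOrth K (φ t) (φ s)) :
    μ (arc φ s t) = ENNReal.ofReal (π / 2) :=
  h.elim (hμ.2 _ _ _ (hφ.isBArc_arc h₁ h₂)) (hμ.2 _ _ _ (hφ.isBArc_arc h₁ h₂).swap)

theorem measure_arc_eq_zero_of_borth (hφ : IsBoundaryParam K φ) (hμ : IsBMeasure K μ)
    {α β γ : ℝ} (h₁ : α < β) (h₂ : β < γ) (h₃ : γ < α + π) (hα : BOrth K (φ α) (φ γ))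
    (hβ : BOrth K (φ β) (φ γ)) : μ (arc φ α β) = 0 := by
  have h := hφ.measure_arc_add hμ.1 h₁.le h₂.le (by linarith [pi_pos])
  rw [hφ.measure_arc_of_borth hμ (h₁.trans h₂) h₃ (Or.inl hα),
    hφ.measure_arc_of_borth hμ h₂ (by linarith) (Or.inl hβ)] at h
  exact (ENNReal.add_left_inj ENNReal.ofReal_ne_top).1 (h.symm.trans (zero_add _).symm)

theorem measure_arc_pos_of_mem_msupp (hφ : IsBoundaryParam K φ) (hμ : IsAngularMeasure K μ)
    {s₀ θ₁ θ₂ : ℝ} (hp : φ s₀ ∈ msupp μ) (h₁ : θ₁ < s₀) (h₂ : s₀ < θ₂) :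
    0 < μ (arc φ θ₁ θ₂) := by
  have hpU : φ s₀ ∉ arc φ θ₂ (θ₁ + 2 * π) := by
    rintro ⟨θ, hθ, h⟩
    have := hφ.eq_of_abs_sub_lt (abs_lt.2 ⟨by linarith [hθ.1, pi_pos], by linarith [hθ.2]⟩) h
    linarith [hθ.1]
  have hsub : (arc φ θ₂ (θ₁ + 2 * π))ᶜ ⊆ arc φ θ₁ θ₂ ∪ (frontier K)ᶜ := by
    intro z hz
    by_cases hzK : z ∈ frontier K
    · obtain ⟨θ, hθ, rfl⟩ := hφ.exists_mem_Ico hzK θ₁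
      refine Or.inl ⟨θ, ⟨hθ.1, le_of_not_gt fun h => hz ⟨θ, ⟨h.le, hθ.2.le⟩, rfl⟩⟩, rfl⟩
    · exact Or.inr hzK
  calc 0 < μ (arc φ θ₂ (θ₁ + 2 * π))ᶜ := hp _ (hφ.isClosed_arc _ _).isOpen_compl hpU
    _ ≤ μ (arc φ θ₁ θ₂) + μ (frontier K)ᶜ := (measure_mono hsub).trans (measure_union_le _ _)
    _ = μ (arc φ θ₁ θ₂) := by rw [hμ.2.1, add_zero]

theorem tendsto_measure_arc_left (hφ : IsBoundaryParam K φ) (hμ : IsAngularMeasure K μ)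
    (s₀ : ℝ) : Tendsto (fun δ => μ (arc φ (s₀ - δ) s₀)) (𝓝[>] 0) (𝓝 0) := by
  have hinter : ⋂ δ > 0, arc φ (s₀ - δ) s₀ ⊆ {φ s₀} := by
    intro z hz
    simp only [mem_iInter] at hz
    obtain ⟨θ, hθ, rfl⟩ := hz π pi_pos
    rcases hθ.2.lt_or_eq with hlt | rfl
    · obtain ⟨θ', hθ', h⟩ := hz ((s₀ - θ) / 2) (by linarith)
      have := hφ.eq_of_abs_sub_lt
        (abs_lt.2 ⟨by linarith [hθ'.1, pi_pos], by linarith [hθ'.2, hθ.1, pi_pos]⟩) h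
      linarith [hθ'.1]
    · rfl
  have hfin : μ (arc φ (s₀ - 1) s₀) ≠ ⊤ :=
    ne_top_of_le_ne_top (hμ.1 ▸ ENNReal.ofReal_ne_top) (measure_mono (hφ.arc_subset_frontier _ _))
  have := tendsto_measure_biInter_gt (μ := μ) (s := fun δ => arc φ (s₀ - δ) s₀) (a := 0)
    (fun _ _ => (hφ.isClosed_arc _ _).nullMeasurableSet)
    (fun _ _ _ hij => arc_mono (by linarith) le_rfl) ⟨1, one_pos, hfin⟩
  rwa [measure_mono_null hinter (hμ.2.2.2 _)] at this

theorem exists_tendsto_of_measure_arc_eq (hφ : IsBoundaryParam K φ) (hK : IsSymmConvexBody K)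
    (hμ : IsBMeasure K μ) {s₀ : ℝ} (hleft : ∀ ε > 0, 0 < μ (arc φ (s₀ - ε) s₀)) :
    ∃ τ, ∀ u : ℝ → ℝ, (∀ δ, u δ ∈ Ioo (s₀ - δ) (s₀ - δ + π) ∧
      μ (arc φ (s₀ - δ) (u δ)) = ENNReal.ofReal (π / 2)) → Tendsto u (𝓝[>] 0) (𝓝 τ) := by
  set P := ENNReal.ofReal (π / 2)
  set m : ℝ → ENNReal := fun θ => μ (arc φ s₀ θ)
  set lam : ℝ → ENNReal := fun δ => μ (arc φ (s₀ - δ) s₀)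
  have hm : Monotone m := fun _ _ h => measure_mono (arc_mono le_rfl h)
  have hP : 0 < P := ENNReal.ofReal_pos.2 (by positivity)
  have hlam : Tendsto lam (𝓝[>] 0) (𝓝 0) := hφ.tendsto_measure_arc_left hμ.1 s₀
  obtain ⟨t₀, ht₀, horth₀⟩ := hφ.exists_borth_right_mem_Ioo hK s₀
  refine ⟨sInf (m ⁻¹' Ici P), fun u hu => ?_⟩
  have hsplit : ∀ᶠ δ in 𝓝[>] 0, lam δ ≠ 0 ∧ m (u δ) = P - lam δ := by
    filter_upwards [self_mem_nhdsWithin, hlam.eventually_lt_const hP] with δ hδ hlamP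
    obtain ⟨⟨hu₁, hu₂⟩, huP⟩ := hu δ
    have hsu : s₀ ≤ u δ := le_of_not_gt fun h =>
      hlamP.not_ge (huP ▸ measure_mono (arc_mono le_rfl h.le))
    have hadd := hφ.measure_arc_add hμ.1 (sub_le_self s₀ (le_of_lt hδ)) hsu (by linarith [pi_pos])
    refine ⟨(hleft δ hδ).ne', ?_⟩
    rw [← huP, hadd, ENNReal.add_sub_cancel_left (hlamP.trans ENNReal.ofReal_lt_top).ne]
  refine hm.tendsto_sInf_preimage_Ici (θ₀ := s₀) (θ₁ := t₀) ?_ ?_ ?_ ?_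
  · simpa [m, arc, hμ.1.2.2.2] using hP
  · exact (hφ.measure_arc_of_borth hμ ht₀.1 ht₀.2 (Or.inl horth₀)).ge
  · have := ENNReal.Tendsto.sub tendsto_const_nhds hlam (Or.inl ENNReal.ofReal_ne_top) (a := P)
    rw [tsub_zero] at this
    exact this.congr' (hsplit.mono fun δ h => h.2.symm)
  · filter_upwards [hsplit] with δ h
    rw [h.2]
    exact ENNReal.sub_lt_self ENNReal.ofReal_ne_top hP.ne' h.1

theorem exists_mutual_borth_of_pos_left (hφ : IsBoundaryParam K φ) (hK : IsSymmConvexBody K)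
    (hμ : IsBMeasure K μ) {s₀ : ℝ} (hleft : ∀ ε > 0, 0 < μ (arc φ (s₀ - ε) s₀)) :
    ∃ τ, BOrth K (φ s₀) (φ τ) ∧ BOrth K (φ τ) (φ s₀) := by
  obtain ⟨τ, hτ⟩ := hφ.exists_tendsto_of_measure_arc_eq hK hμ hleft
  choose t ht horth_t using fun δ => hφ.exists_borth_right_mem_Ioo hK (s₀ - δ)
  choose σ hσ horth_σ using fun δ => hφ.exists_borth_left_mem_Ioo hK (s₀ - δ)
  have hbase : Tendsto (fun δ => φ (s₀ - δ)) (𝓝[>] 0) (𝓝 (φ s₀)) :=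
    ((hφ.continuous.comp (continuous_sub_left s₀)).tendsto' 0 _ (by simp)).mono_left
      nhdsWithin_le_nhds
  have ht_lim := (hφ.continuous.tendsto τ).comp (hτ t fun δ =>
    ⟨ht δ, hφ.measure_arc_of_borth hμ (ht δ).1 (ht δ).2 (Or.inl (horth_t δ))⟩)
  have hσ_lim := (hφ.continuous.tendsto τ).comp (hτ σ fun δ =>
    ⟨hσ δ, hφ.measure_arc_of_borth hμ (hσ δ).1 (hσ δ).2 (Or.inr (horth_σ δ))⟩)
  exact ⟨τ, hK.isClosed_setOf_borth.mem_of_tendsto (hbase.prodMk_nhds ht_lim)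
      (Eventually.of_forall horth_t),
    hK.isClosed_setOf_borth.mem_of_tendsto (hσ_lim.prodMk_nhds hbase)
      (Eventually.of_forall horth_σ)⟩

end IsBoundaryParam

noncomputable def boundaryPoint (K : Set Plane) (θ : ℝ) : Plane :=
  (gauge K (cos θ, sin θ))⁻¹ • (cos θ, sin θ)

theorem wedge_boundaryPoint (K : Set Plane) (s t : ℝ) :
    wedge (boundaryPoint K s) (boundaryPoint K t) =
      (gauge K (cos s, sin s))⁻¹ * (gauge K (cos t, sin t))⁻¹ * sin (t - s) := by
  simp only [boundaryPoint, wedge_apply, Prod.smul_fst, Prod.smul_snd, smul_eq_mul, sin_sub]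
  ring

namespace IsSymmConvexBody

variable {K : Set Plane} {μ : Measure Plane}

theorem gauge_cos_sin_pos (hK : IsSymmConvexBody K) (θ : ℝ) : 0 < gauge K (cos θ, sin θ) :=
  hK.gauge_pos.2 fun h => by
    rw [Prod.mk_eq_zero] at h
    simpa [h.1, h.2] using sin_sq_add_cos_sq θ

theorem eq_of_boundaryPoint_eq (hK : IsSymmConvexBody K) {a b : ℝ} (hab : |a - b| < 2 * π)
    (h : boundaryPoint K a = boundaryPoint K b) : a = b := by
  set x := (gauge K (cos a, sin a))⁻¹
  set y := (gauge K (cos b, sin b))⁻¹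
  have hx : 0 < x := inv_pos.2 (hK.gauge_cos_sin_pos a)
  have hy : 0 < y := inv_pos.2 (hK.gauge_cos_sin_pos b)
  have h₁ : x * cos a = y * cos b := congrArg Prod.fst h
  have h₂ : x * sin a = y * sin b := congrArg Prod.snd h
  have hxy : x = y := by
    refine (sq_eq_sq₀ hx.le hy.le).1 ?_
    linear_combination (x * cos a + y * cos b) * h₁ + (x * sin a + y * sin b) * h₂ -
      x ^ 2 * sin_sq_add_cos_sq a + y ^ 2 * sin_sq_add_cos_sq b
  rw [hxy] at h₁ h₂
  obtain ⟨k, hk⟩ := Real.Angle.angle_eq_iff_two_pi_dvd_sub.1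
    (Real.Angle.cos_sin_inj (mul_left_cancel₀ hy.ne' h₁) (mul_left_cancel₀ hy.ne' h₂))
  rw [hk, abs_mul, abs_of_pos two_pi_pos, mul_lt_iff_lt_one_right two_pi_pos] at hab
  have hk0 : k = 0 := Int.abs_lt_one_iff.1 (by exact_mod_cast hab)
  simpa [hk0, sub_eq_zero] using hk

theorem isBoundaryParam_boundaryPoint (hK : IsSymmConvexBody K) :
    IsBoundaryParam K (boundaryPoint K) where
  continuous := ((hK.continuous_gauge.comp (by fun_prop)).inv₀
    fun θ => (hK.gauge_cos_sin_pos θ).ne').smul (by fun_prop)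
  mem_frontier θ := hK.inv_gauge_smul_mem_frontier (hK.gauge_pos.1 (hK.gauge_cos_sin_pos θ))
  exists_eq z hz := by
    set ζ : ℂ := ⟨z.1, z.2⟩
    have hζ : ζ ≠ 0 := fun h => hK.zero_notMem_frontier <| by
      rwa [show z = 0 from Prod.ext (by simpa [ζ] using congrArg Complex.re h)
        (by simpa [ζ] using congrArg Complex.im h)] at hz
    have hdir : ((cos ζ.arg, sin ζ.arg) : Plane) = ‖ζ‖⁻¹ • z := by
      rw [Complex.cos_arg hζ, Complex.sin_arg]
      ext <;> simp [ζ, div_eq_inv_mul]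
    refine ⟨ζ.arg, ?_⟩
    rw [boundaryPoint, hdir, gauge_smul_of_nonneg (by positivity), hK.gauge_eq_one_iff.2 hz,
      smul_eq_mul, mul_one, inv_inv, smul_smul, mul_inv_cancel₀ (norm_ne_zero_iff.2 hζ), one_smul]
  antiperiodic θ := by
    simp only [boundaryPoint, cos_add_pi, sin_add_pi]
    rw [← Prod.neg_mk, hK.gauge_neg, smul_neg]
  eq_of_abs_sub_lt := hK.eq_of_boundaryPoint_eq

theorem wedge_boundaryPoint_pos_iff (hK : IsSymmConvexBody K) {s t : ℝ} (h₁ : -π < t - s)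
    (h₂ : t - s < 2 * π) :
    0 < wedge (boundaryPoint K s) (boundaryPoint K t) ↔ 0 < t - s ∧ t - s < π := by
  have hs := hK.gauge_cos_sin_pos s
  have ht := hK.gauge_cos_sin_pos t
  rw [wedge_boundaryPoint, mul_pos_iff_of_pos_left (by positivity)]
  refine ⟨fun h => ⟨lt_of_not_ge fun h' => h.not_ge (sin_nonpos_of_nonpos_of_neg_pi_le h' h₁.le),
    lt_of_not_ge fun h' => ?_⟩, fun h => sin_pos_of_pos_of_lt_pi h.1 h.2⟩
  have := sin_nonneg_of_nonneg_of_le_pi (x := t - s - π) (by linarith) (by linarith)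
  rw [sin_sub_pi] at this
  linarith

theorem borth_of_segment_subset_frontier (hK : IsSymmConvexBody K) {a b : Plane}
    (hseg : segment ℝ a b ⊆ frontier K) (c : ℝ) :
    BOrth K a (c • (b - a)) ∧ BOrth K b (c • (b - a)) := by
  have hmid : (1 / 2 : ℝ) • a + (1 / 2 : ℝ) • b ∈ frontier K :=
    hseg ⟨1 / 2, 1 / 2, by norm_num, by norm_num, by norm_num, rfl⟩
  obtain ⟨f, hf, hmax⟩ := hK.exists_isMaxOn_of_mem_frontier hmid
  have hK' := hK.2.1.isClosed.frontier_subset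
  have haK := hK' (hseg (left_mem_segment ℝ a b))
  have hbK := hK' (hseg (right_mem_segment ℝ a b))
  have hfmid : f ((1 / 2 : ℝ) • a + (1 / 2 : ℝ) • b) = (f a + f b) / 2 := by
    simp only [map_add, map_smul, smul_eq_mul]
    ring
  have hfa := hfmid ▸ isMaxOn_iff.1 hmax a haK
  have hfb := hfmid ▸ isMaxOn_iff.1 hmax b hbK
  have hab : f a = f b := by linarith
  have hmax_a : IsMaxOn f K a := isMaxOn_iff.2 fun z hz => by
    linarith [hfmid ▸ isMaxOn_iff.1 hmax z hz]
  have hmax_b : IsMaxOn f K b := isMaxOn_iff.2 fun z hz => by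
    linarith [hfmid ▸ isMaxOn_iff.1 hmax z hz]
  have hf0 : f (c • (b - a)) = 0 := by simp [hab]
  exact ⟨hK.borth_of_isMaxOn hf haK hmax_a hf0, hK.borth_of_isMaxOn hf hbK hmax_b hf0⟩

theorem exists_borth_of_segment_subset_frontier (hK : IsSymmConvexBody K) {α β : ℝ}
    (hαβ : α < β) (hβα : β < α + π)
    (hseg : segment ℝ (boundaryPoint K α) (boundaryPoint K β) ⊆ frontier K) :
    ∃ γ, β < γ ∧ γ < α + π ∧ BOrth K (boundaryPoint K α) (boundaryPoint K γ) ∧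
      BOrth K (boundaryPoint K β) (boundaryPoint K γ) := by
  have hπ := pi_pos
  set a := boundaryPoint K α
  set b := boundaryPoint K β
  have hab : 0 < wedge a b :=
    (hK.wedge_boundaryPoint_pos_iff (by linarith) (by linarith)).2 ⟨by linarith, by linarith⟩
  have hba : b - a ≠ 0 := sub_ne_zero.2 fun h => by rw [h, wedge_self] at hab; exact hab.false
  obtain ⟨γ, hγ, hγba⟩ :=
    hK.isBoundaryParam_boundaryPoint.exists_mem_Ico (hK.inv_gauge_smul_mem_frontier hba) β
  have hc : 0 < (gauge K (b - a))⁻¹ := inv_pos.2 (hK.gauge_pos.2 hba)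
  have hwa : 0 < wedge a (boundaryPoint K γ) := by
    rw [hγba, map_smul, map_sub, wedge_self, sub_zero, smul_eq_mul]
    positivity
  have hwb : 0 < wedge b (boundaryPoint K γ) := by
    rw [hγba, map_smul, map_sub, wedge_self, zero_sub, wedge_swap, neg_neg, smul_eq_mul]
    positivity
  obtain ⟨hβγ, hγβ⟩ :=
    (hK.wedge_boundaryPoint_pos_iff (by linarith [hγ.1]) (by linarith [hγ.2])).1 hwb
  obtain ⟨-, hγα⟩ := (hK.wedge_boundaryPoint_pos_iff (by linarith) (by linarith)).1 hwa
  have horth := hK.borth_of_segment_subset_frontier hseg (gauge K (b - a))⁻¹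
  rw [← hγba] at horth
  exact ⟨γ, by linarith, by linarith, horth⟩

theorem exists_mem_Ioo_of_mem_openSegment (hK : IsSymmConvexBody K) {α β : ℝ} (hαβ : α < β)
    (hβα : β < α + π) {p : Plane} (hpK : p ∈ frontier K)
    (hp : p ∈ openSegment ℝ (boundaryPoint K α) (boundaryPoint K β)) :
    ∃ s ∈ Ioo α β, boundaryPoint K s = p := by
  have hπ := pi_pos
  set a := boundaryPoint K α
  set b := boundaryPoint K β
  have hab : 0 < wedge a b :=
    (hK.wedge_boundaryPoint_pos_iff (by linarith) (by linarith)).2 ⟨by linarith, by linarith⟩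
  obtain ⟨s, hs, rfl⟩ := hK.isBoundaryParam_boundaryPoint.exists_mem_Ico hpK α
  obtain ⟨u, v, hu, hv, -, huv⟩ := hp
  have has : wedge a (boundaryPoint K s) = v * wedge a b := by
    simp only [← huv, wedge_apply, Prod.fst_add, Prod.snd_add, Prod.smul_fst, Prod.smul_snd,
      smul_eq_mul]
    ring
  have hsb : wedge (boundaryPoint K s) b = u * wedge a b := by
    simp only [← huv, wedge_apply, Prod.fst_add, Prod.snd_add, Prod.smul_fst, Prod.smul_snd,
      smul_eq_mul]
    ring
  obtain ⟨hαs, hsα⟩ := (hK.wedge_boundaryPoint_pos_iff (by linarith [hs.1])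
    (by linarith [hs.2])).1 (has ▸ mul_pos hv hab)
  obtain ⟨hsβ, -⟩ := (hK.wedge_boundaryPoint_pos_iff (by linarith) (by linarith)).1
    (hsb ▸ mul_pos hu hab)
  exact ⟨s, ⟨by linarith, by linarith⟩, rfl⟩

theorem notMem_msupp_of_mem_openSegment (hK : IsSymmConvexBody K) (hμ : IsBMeasure K μ)
    {α β : ℝ} (hαβ : α < β) (hβα : β < α + π)
    (hseg : segment ℝ (boundaryPoint K α) (boundaryPoint K β) ⊆ frontier K) {p : Plane}
    (hp : p ∈ openSegment ℝ (boundaryPoint K α) (boundaryPoint K β)) : p ∉ msupp μ := by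
  have hφ := hK.isBoundaryParam_boundaryPoint
  obtain ⟨γ, hβγ, hγα, hα, hβ⟩ := hK.exists_borth_of_segment_subset_frontier hαβ hβα hseg
  obtain ⟨s, hs, rfl⟩ := hK.exists_mem_Ioo_of_mem_openSegment hαβ hβα
    (hseg (openSegment_subset_segment ℝ _ _ hp)) hp
  intro hmem
  have hpos := hφ.measure_arc_pos_of_mem_msupp hμ.1 hmem hs.1 hs.2
  rw [hφ.measure_arc_eq_zero_of_borth hμ hαβ hβγ hγα hα hβ] at hpos
  exact hpos.false

theorem notMem_segUnion_of_mem_msupp (hK : IsSymmConvexBody K) (hμ : IsBMeasure K μ)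
    {p : Plane} (hp : p ∈ msupp μ) : p ∉ SegUnion K := by
  rintro ⟨a, b, hab, hseg, hpab⟩
  have hφ := hK.isBoundaryParam_boundaryPoint
  obtain ⟨α, rfl⟩ := hφ.exists_eq a (hseg (left_mem_segment ℝ a b))
  obtain ⟨β, ⟨hαβ, hβα⟩, rfl⟩ := hφ.exists_mem_Ico (hseg (right_mem_segment ℝ _ b)) α
  have hαβ' : α < β := lt_of_le_of_ne hαβ fun h => hab (h ▸ rfl)
  have hβ : β ≠ α + π := by
    rintro rfl
    refine hK.zero_notMem_frontier (hseg ⟨1 / 2, 1 / 2, by norm_num, by norm_num, by norm_num, ?_⟩)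
    rw [hφ.antiperiodic, smul_neg, add_neg_cancel]
  rcases lt_or_gt_of_ne hβ with h | h
  · exact hK.notMem_msupp_of_mem_openSegment hμ hαβ' h hseg hpab hp
  · rw [← hφ.antiperiodic.periodic_two_mul α, segment_symm] at hseg
    rw [← hφ.antiperiodic.periodic_two_mul α, openSegment_symm] at hpab
    exact hK.notMem_msupp_of_mem_openSegment hμ hβα (by linarith) hseg hpab hp

theorem mem_auerbach_of_mem_msupp (hK : IsSymmConvexBody K) (hμ : IsBMeasure K μ)
    {p : Plane} (hp : p ∈ msupp μ) : p ∈ Auerbach K := by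
  have hφ := hK.isBoundaryParam_boundaryPoint
  obtain ⟨s₀, rfl⟩ := hφ.exists_eq p (hμ.1.msupp_subset_frontier hp)
  suffices ∃ τ, BOrth K (boundaryPoint K s₀) (boundaryPoint K τ) ∧
      BOrth K (boundaryPoint K τ) (boundaryPoint K s₀) by
    obtain ⟨τ, h₁, h₂⟩ := this
    exact ⟨hφ.mem_frontier s₀, _, hφ.mem_frontier τ, h₁, h₂⟩
  by_cases hleft : ∀ ε > 0, 0 < μ (arc (boundaryPoint K) (s₀ - ε) s₀)
  · exact hφ.exists_mutual_borth_of_pos_left hK hμ hleft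
  -- No mass just left of `s₀`, hence mass just right of it: reverse the orientation.
  push Not at hleft
  obtain ⟨ε₀, hε₀, hnull⟩ := hleft
  have hright : ∀ ε > 0, 0 < μ (arc (fun θ => boundaryPoint K (-θ)) (-s₀ - ε) (-s₀)) := by
    intro ε hε
    rw [show -s₀ - ε = -(s₀ + ε) by ring, arc_comp_neg]
    calc 0 < μ (arc (boundaryPoint K) (s₀ - ε₀) (s₀ + ε)) :=
          hφ.measure_arc_pos_of_mem_msupp (θ₁ := s₀ - ε₀) (θ₂ := s₀ + ε) hμ.1 hp
            (by linarith) (by linarith)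
      _ ≤ μ (arc (boundaryPoint K) (s₀ - ε₀) s₀) + μ (arc (boundaryPoint K) s₀ (s₀ + ε)) := by
          rw [arc_union (t := s₀) (by linarith) (by linarith)]
          exact measure_union_le _ _
      _ = μ (arc (boundaryPoint K) s₀ (s₀ + ε)) := by rw [nonpos_iff_eq_zero.1 hnull, zero_add]
  obtain ⟨τ, h₁, h₂⟩ := hφ.comp_neg.exists_mutual_borth_of_pos_left hK hμ hright
  exact ⟨-τ, by simpa using h₁, by simpa using h₂⟩

end IsSymmConvexBody

/-- The support of a B-measure is contained in `A(K) \ E(K)`. -/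
theorem stmt_3 (K : Set Plane) (hK : IsSymmConvexBody K)
    (μ : Measure Plane) (hμ : IsBMeasure K μ) :
    msupp μ ⊆ Auerbach K \ SegUnion K :=
  fun _ hp => ⟨hK.mem_auerbach_of_mem_msupp hμ hp, hK.notMem_segUnion_of_mem_msupp hμ hp⟩
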